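/- For every positive integer n there exists a bipartite graph H with bipartition {U, V}, |U| = |V| = 4n, and minimum degree δ(H) = 3n = (3/4)·|U|, together with a 2-edge-coloring of H, such that H contains no monochromatic cycle C_{4n}; that is, neither color class contains a cycle of length 4n. -/

import Mathlib

/-- The spanning subgraph of `G` consisting of the edges with color `i`,
given an edge coloring `χ` (on pairs of vertices) with `r` colors. -/
def colorSubgraph {V : Type*} {r : ℕ} (G : SimpleGraph V) (χ : Sym2 V → Fin r) (i : Fin r) :
    SimpleGraph V where
  Adj u v := G.Adj u v ∧ χ s(u, v) = i
  symm := ⟨fun u v h => ⟨h.1.symm, by rw [Sym2.eq_swap]; exact h.2⟩⟩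
  loopless := ⟨fun u h => G.loopless.irrefl u h.1⟩

/-- `G` contains a cycle of length `m` (on `m` vertices) as a subgraph. -/
def HasCycleLength {V : Type*} (G : SimpleGraph V) (m : ℕ) : Prop :=
  ∃ (v : V) (w : G.Walk v v), w.IsCycle ∧ w.length = m

/-!
`H` is the `n`-fold blow-up of `K_{4,4}` minus a perfect matching: both sides are cut into four
blocks of size `n`, block `a` of `U` is joined completely to block `b` of `V` unless
`b = a + 2 (mod 4)`, and these edges get colour `0` iff `a + b ≡ 0, 1 (mod 4)`. In the base graph
each colour class is two disjoint paths on four vertices, so each colour class of `H` splits into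
pieces with exactly `4n` vertices, and a monochromatic `C_{4n}` would be Hamiltonian in one of them.
But the blow-up `A` of an end vertex of such a path has all its neighbours in the blow-up `B` of
the next vertex, and `#A = #B = n`; counting the edges of the cycle at `A` and at `B` shows that
the cycle cannot leave `A ∪ B`, which has only `2n` vertices.
-/

open Finset

section Fibres

variable {V W : Type*} [Fintype V] [DecidableEq W] {f : V → W} {n : ℕ}

theorem card_filter_mem_of_card_fiber (hf : ∀ a, #{x | f x = a} = n) (T : Finset W) :
    #{x | f x ∈ T} = #T * n := by
  rw [card_eq_sum_card_fiberwise (s := {x | f x ∈ T}) (t := T) fun x hx => by simpa using hx,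
    ← smul_eq_mul, ← sum_const]
  refine sum_congr rfl fun a ha => ?_
  rw [← hf a, filter_filter]
  congr 1
  ext x
  simp only [mem_filter, mem_univ, true_and, and_iff_right_iff_imp]
  exact fun hx => hx ▸ ha

theorem card_fiber_fst_equiv [Fintype W] (e : V ≃ W × Fin n) (a : W) :
    #{x | (e x).1 = a} = n := by
  have hmem (x : V) : x ∈ ({x | (e x).1 = a} : Finset V) ↔ e x ∈ ({a} ×ˢ univ : Finset _) := by
    simp only [mem_filter, mem_univ, true_and, mem_product, mem_singleton, and_true]
  rw [card_equiv e hmem, card_product, card_singleton, card_univ, Fintype.card_fin, one_mul]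

theorem degree_comap_of_card_fiber [Fintype W] (G : SimpleGraph W) [DecidableRel G.Adj]
    (hf : ∀ a, #{x | f x = a} = n) (v : V) [Fintype ((G.comap f).neighborSet v)] :
    (G.comap f).degree v = G.degree (f v) * n := by
  rw [← SimpleGraph.card_neighborFinset_eq_degree, ← SimpleGraph.card_neighborFinset_eq_degree,
    ← card_filter_mem_of_card_fiber hf]
  congr 1
  ext x
  simp

end Fibres

namespace SimpleGraph.Walk

variable {V : Type*} {G : SimpleGraph V} {v : V}

theorem support_subset_of_forall_dart {w : G.Walk v v} {S : Set V}
    (hS : ∀ d ∈ w.darts, d.fst ∈ S → d.snd ∈ S) {a : V} (ha : a ∈ w.support) (haS : a ∈ S) :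
    ∀ x ∈ w.support, x ∈ S := by
  classical
  intro x hx
  by_contra hxS
  obtain ⟨d, hd, hfst, hsnd⟩ :=
    ((w.dropUntil a ha).append (w.takeUntil x hx)).exists_boundary_dart S haS hxS
  rw [darts_append, List.mem_append] at hd
  refine hsnd (hS d ?_ hfst)
  exact hd.elim (fun h => w.darts_dropUntil_subset_darts ha h)
    (fun h => w.darts_takeUntil_subset_darts hx h)

variable [DecidableEq V]

theorem IsCycle.snd_mem_of_fst_mem {w : G.Walk v v} (hw : w.IsCycle) {A B : Finset V}
    (hA : ∀ a ∈ A, a ∈ w.support) (hAB : ∀ a ∈ A, ∀ b, G.Adj a b → b ∈ B) (hBA : #B ≤ #A) :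
    ∀ d ∈ w.darts, d.fst ∈ B → d.snd ∈ A := by
  -- The darts entering `A` all leave `B`; there are `#A` of them, and at most `#B ≤ #A` darts
  -- leave `B`, so the two sets of darts coincide.
  set X := w.darts.toFinset.filter (·.snd ∈ A)
  set Y := w.darts.toFinset.filter (·.fst ∈ B)
  have hXY : X ⊆ Y := fun d hd => by
    simp only [X, Y, mem_filter, List.mem_toFinset] at hd ⊢
    exact ⟨hd.1, hAB _ hd.2 _ d.adj.symm⟩
  have hAX : #A ≤ #X := by
    refine card_le_card_of_surjOn (·.snd) fun a ha => ?_
    have : a ∈ w.darts.map (·.snd) := by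
      rw [w.map_snd_darts]
      exact (w.mem_support_iff.mp (hA a ha)).elim
        (fun h => h ▸ w.end_mem_tail_support hw.not_nil) id
    obtain ⟨d, hd, rfl⟩ := List.mem_map.mp this
    exact ⟨d, mem_filter.mpr ⟨List.mem_toFinset.mpr hd, ha⟩, rfl⟩
  have hYB : #Y ≤ #B := by
    refine card_le_card_of_injOn (·.fst) (fun d hd => (mem_filter.mp hd).2) ?_
    intro d hd d' hd' h
    refine List.inj_on_of_nodup_map (f := (·.fst)) ?_
      (List.mem_toFinset.mp (mem_filter.mp hd).1) (List.mem_toFinset.mp (mem_filter.mp hd').1) h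
    rw [w.map_fst_darts]
    exact hw.nodup_dropLast_support
  have hXeqY : X = Y := eq_of_subset_of_card_le hXY (by omega)
  intro d hd hdB
  have : d ∈ X := hXeqY ▸ mem_filter.mpr ⟨List.mem_toFinset.mpr hd, hdB⟩
  exact (mem_filter.mp this).2

theorem IsCycle.support_subset_union {w : G.Walk v v} (hw : w.IsCycle) {A B : Finset V}
    (hA : ∀ a ∈ A, a ∈ w.support) (hAB : ∀ a ∈ A, ∀ b, G.Adj a b → b ∈ B) (hBA : #B ≤ #A)
    (hA₀ : A.Nonempty) : ∀ x ∈ w.support, x ∈ A ∪ B := by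
  obtain ⟨a, ha⟩ := hA₀
  refine w.support_subset_of_forall_dart (S := ↑(A ∪ B)) (fun d hd hfst => ?_) (hA a ha)
    (mem_union_left B ha)
  rcases mem_union.mp hfst with h | h
  · exact mem_union_right A (hAB _ h _ d.adj)
  · exact mem_union_left B (hw.snd_mem_of_fst_mem hA hAB hBA d hd h)

end SimpleGraph.Walk

instance {V : Type*} {r : ℕ} (G : SimpleGraph V) [DecidableRel G.Adj] (χ : Sym2 V → Fin r)
    (i : Fin r) : DecidableRel (colorSubgraph G χ i).Adj :=
  fun u v => inferInstanceAs (Decidable (G.Adj u v ∧ χ s(u, v) = i))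

theorem colorSubgraph_comap {V W : Type*} {r : ℕ} (f : V → W) (G : SimpleGraph W)
    (χ : Sym2 W → Fin r) (i : Fin r) :
    colorSubgraph (G.comap f) (χ ∘ Sym2.map f) i = (colorSubgraph G χ i).comap f :=
  rfl

theorem not_hasCycleLength_comap {V W κ : Type*} [Fintype V] [DecidableEq V] [Fintype W]
    [DecidableEq W] [DecidableEq κ] {Q : SimpleGraph W} {f : V → W} {n m : ℕ} (hn : 0 < n)
    (hf : ∀ a, #{x | f x = a} = n) (g : W → κ) (hg : ∀ a b, Q.Adj a b → g a = g b)
    (hgm : ∀ a, #{b | g b = g a} = m)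
    (hleaf : ∀ a, ∃ ℓ p, g ℓ = g a ∧ ∀ b, Q.Adj ℓ b → b = p) (hm : 2 < m) :
    ¬ HasCycleLength (Q.comap f) (m * n) := by
  rintro ⟨v, w, hw, hlen⟩
  set F : Finset V := {x | f x ∈ ({b | g b = g (f v)} : Finset W)}
  have hF : #F = m * n := by rw [card_filter_mem_of_card_fiber hf, hgm]
  have hsupp : ∀ x ∈ w.support, x ∈ F := by
    refine w.support_subset_of_forall_dart (S := ↑F) (fun d _ hfst => ?_) w.start_mem_support
      (by simp [F])
    simpa [F, hg _ _ d.adj] using hfst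
  have hF_support : ∀ x ∈ F, x ∈ w.support := by
    have htail : w.support.tail.toFinset = F := by
      refine eq_of_subset_of_card_le (fun x hx => hsupp x (List.mem_of_mem_tail
        (List.mem_toFinset.mp hx))) ?_
      rw [List.toFinset_card_of_nodup hw.support_nodup, List.length_tail, w.length_support, hF,
        hlen, Nat.add_sub_cancel]
    exact fun x hx => List.mem_of_mem_tail (List.mem_toFinset.mp (htail ▸ hx))
  obtain ⟨ℓ, p, hℓ, hp⟩ := hleaf (f v)
  have hA : ∀ a ∈ ({x | f x = ℓ} : Finset V), a ∈ w.support := fun a ha =>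
    hF_support a (by simp_all [F])
  have hAB : ∀ a ∈ ({x | f x = ℓ} : Finset V), ∀ b, (Q.comap f).Adj a b →
      b ∈ ({x | f x = p} : Finset V) := fun a ha b hab => by
    rw [mem_filter] at ha ⊢
    exact ⟨mem_univ b, hp _ (ha.2 ▸ hab)⟩
  have hcover := hw.support_subset_union hA hAB (by rw [hf, hf])
    (by rw [← card_pos, hf]; exact hn)
  have hF_le : #F ≤ #({ℓ, p} : Finset W) * n := by
    rw [← card_filter_mem_of_card_fiber hf]
    refine card_le_card fun x hx => ?_
    have := hcover x (hF_support x hx)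
    simp_all
  have : #({ℓ, p} : Finset W) ≤ 2 := card_le_two
  nlinarith

def baseGraph : SimpleGraph (Fin 4 ⊕ Fin 4) where
  Adj
    | .inl a, .inr b | .inr b, .inl a => b ≠ a + 2
    | _, _ => False
  symm := ⟨by rintro (a | a) (b | b) h <;> exact h⟩
  loopless := ⟨by rintro (a | a) h <;> exact h⟩

instance : DecidableRel baseGraph.Adj
  | .inl a, .inr b | .inr b, .inl a => inferInstanceAs (Decidable (b ≠ a + 2))
  | .inl _, .inl _ | .inr _, .inr _ => inferInstanceAs (Decidable False)

def baseColoring : Sym2 (Fin 4 ⊕ Fin 4) → Fin 2 :=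
  Sym2.lift ⟨fun x y => if x.elim id id + y.elim id id < 2 then 0 else 1,
    fun x y => by dsimp only; rw [add_comm]⟩

/-- Colour class `i` of `baseGraph` has two components, on the blocks `{i, i + 1}` and
`{i + 2, i + 3}`; `baseLabel i` tells them apart. -/
def baseLabel (i : Fin 2) (x : Fin 4 ⊕ Fin 4) : Fin 4 :=
  (x.elim id id - i.castLE (by norm_num)) / 2

theorem baseGraph_degree (a : Fin 4 ⊕ Fin 4) : baseGraph.degree a = 3 := by
  revert a; decide

theorem baseLabel_eq_of_adj (i : Fin 2) (a b : Fin 4 ⊕ Fin 4)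
    (hab : (colorSubgraph baseGraph baseColoring i).Adj a b) :
    baseLabel i a = baseLabel i b := by
  revert i a b; decide

theorem card_baseLabel_fiber (i : Fin 2) (a : Fin 4 ⊕ Fin 4) :
    #{b | baseLabel i b = baseLabel i a} = 4 := by
  revert i a; decide

theorem exists_leaf_colorSubgraph_baseGraph (i : Fin 2) (a : Fin 4 ⊕ Fin 4) :
    ∃ ℓ p, baseLabel i ℓ = baseLabel i a ∧
      ∀ b, (colorSubgraph baseGraph baseColoring i).Adj ℓ b → b = p := by
  revert i a; decide

def blockEquiv (n : ℕ) : Fin (4 * n) ⊕ Fin (4 * n) ≃ (Fin 4 ⊕ Fin 4) × Fin n :=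
  (Equiv.sumCongr finProdFinEquiv.symm finProdFinEquiv.symm).trans
    (Equiv.sumProdDistrib _ _ _).symm

def blockMap (n : ℕ) (x : Fin (4 * n) ⊕ Fin (4 * n)) : Fin 4 ⊕ Fin 4 := (blockEquiv n x).1

theorem comap_blockMap_le_completeBipartiteGraph (n : ℕ) :
    baseGraph.comap (blockMap n) ≤ completeBipartiteGraph (Fin (4 * n)) (Fin (4 * n)) := by
  rintro (u | u) (v | v) h
  · exact h.elim
  · simp
  · simp
  · exact h.elim

open scoped Classical

/-- For every positive `n` there is a bipartite graph `H` with parts of size `4n`,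
minimum degree exactly `3n`, and a 2-edge-coloring of `H` with no monochromatic
cycle `C_{4n}`. -/
theorem extremal_example_min_degree (n : ℕ) (hn : 0 < n) :
    ∃ (H : SimpleGraph (Fin (4 * n) ⊕ Fin (4 * n)))
      (χ : Sym2 (Fin (4 * n) ⊕ Fin (4 * n)) → Fin 2),
      H ≤ completeBipartiteGraph (Fin (4 * n)) (Fin (4 * n)) ∧
      H.minDegree = 3 * n ∧
      ∀ i : Fin 2, ¬ HasCycleLength (colorSubgraph H χ i) (4 * n) := by
  have : Nonempty (Fin (4 * n) ⊕ Fin (4 * n)) := ⟨.inl ⟨0, by omega⟩⟩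
  have hfiber : ∀ a, #{x | blockMap n x = a} = n := card_fiber_fst_equiv (blockEquiv n)
  refine ⟨baseGraph.comap (blockMap n), baseColoring ∘ Sym2.map (blockMap n),
    comap_blockMap_le_completeBipartiteGraph n, ?_, fun i => ?_⟩
  · have hreg : (baseGraph.comap (blockMap n)).IsRegularOfDegree (3 * n) := fun x => by
      rw [degree_comap_of_card_fiber baseGraph hfiber, baseGraph_degree]
    convert hreg.minDegree_eq
  · rw [colorSubgraph_comap]
    exact not_hasCycleLength_comap hn hfiber (baseLabel i)
      (baseLabel_eq_of_adj i) (card_baseLabel_fiber i)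
      (exists_leaf_colorSubgraph_baseGraph i) (by norm_num)
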